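/- Winograd's lower bound instance: any bilinear algorithm computing the 2×2 matrix product over a field requires at least 7 multiplications, i.e., R(2,2,2) ≥ 7; combined with Strassen's algorithm, R(2,2,2) = 7. -/

import Mathlib

/-- A bilinear algorithm of rank `r` for the `m × n` by `n × p` matrix product over `F`. -/
def HasBilinearAlgo (F : Type*) [Field F] (m n p r : ℕ) : Prop :=
  ∃ (f : Fin r → (Matrix (Fin m) (Fin n) F →ₗ[F] F))
    (g : Fin r → (Matrix (Fin n) (Fin p) F →ₗ[F] F))
    (C : Fin r → Matrix (Fin m) (Fin p) F),
    ∀ A B, A * B = ∑ i, (f i A * g i B) • C i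

/-- The tensor rank of the `m × n` by `n × p` matrix multiplication over `F`. -/
noncomputable def matMulRank (F : Type*) [Field F] (m n p : ℕ) : ℕ :=
  sInf {r | HasBilinearAlgo F m n p r}

/-!
Strassen's algorithm uses seven products. For the lower bound, take a six-term decomposition
`A * B = ∑ i, (f i A * g i B) • C i` and two indices `j ≠ k`; the common kernels of `f j, f k`
and of `g j, g k` are at least two-dimensional.

If both kernels contain invertible matrices, normalise them to `1`. Then `X = X * 1 = 1 * X`
expands `X` in the basis formed by the four remaining `C i`, which forces
`f i X * g i Y = f i Y * g i X` for those terms. So every commutator lies in `span {C j, C k}`,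
whereas commutators span the three-dimensional `sl₂`.

Otherwise, say the kernel of `f j, f k` consists of singular matrices. A two-dimensional space of
singular `2 × 2` matrices is a column plane `{v uᵀ}` or a row plane `{u wᵀ}`. A column plane is
impossible: the four remaining terms would compute `(u, B) ↦ v (uᵀ B)`, a map of rank four, so
every remaining `C i`, and with it every product `A * B₀` with `B₀ ≠ 0` in the kernel of
`g j, g k`, would lie in `{v uᵀ}`. Hence `f j, f k` vanish on a common row plane; by
transposition, in the remaining case `g j, g k` vanish on a common column plane.

A nonzero functional vanishes on at most one row plane, so these relations are transitive, and one
of them relates all pairs of indices. Then all `f i` (or all `g i`) vanish on a common nonzero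
matrix, which contradicts `A = A * 1` (or `B = 1 * B`).
-/

open Matrix Module Finset

section LinearAlgebra

variable {F V W : Type*} [Field F] [AddCommGroup V] [Module F V] [AddCommGroup W] [Module F W]

theorem exists_apply_eq_ite_of_card_le_finrank [FiniteDimensional F V] {ι : Type*} [DecidableEq ι]
    (ψ : ι → V →ₗ[F] F) {S : Finset ι} (hS : S.card ≤ finrank F V)
    (hψ : ∀ v, (∀ i ∈ S, ψ i v = 0) → v = 0) {i : ι} (hi : i ∈ S) :
    ∃ v, ∀ j ∈ S, ψ j v = if j = i then 1 else 0 := by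
  let Ψ : V →ₗ[F] (S → F) := LinearMap.pi fun j => ψ j
  have hinj : Function.Injective Ψ := by
    rw [← LinearMap.ker_eq_bot, Submodule.eq_bot_iff]
    exact fun v hv => hψ v fun j hj => congr_fun hv ⟨j, hj⟩
  have hsurj : Function.Surjective Ψ := by
    refine (LinearMap.injective_iff_surjective_of_finrank_eq_finrank ?_).mp hinj
    have := LinearMap.finrank_le_finrank_of_injective hinj
    simp only [finrank_fintype_fun_eq_card, Fintype.card_coe] at this ⊢
    omega
  obtain ⟨v, hv⟩ := hsurj (Pi.single ⟨i, hi⟩ 1)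
  refine ⟨v, fun j hj => ?_⟩
  have := congr_fun hv ⟨j, hj⟩
  simp only [Ψ, LinearMap.pi_apply] at this
  rw [this, Pi.single_apply]
  simp

theorem finrank_le_finrank_ker_inf_add_two [FiniteDimensional F V] (φ ψ : V →ₗ[F] F) :
    finrank F V ≤ finrank F ↥(LinearMap.ker φ ⊓ LinearMap.ker ψ) + 2 := by
  rw [← LinearMap.ker_prod, ← LinearMap.finrank_range_add_finrank_ker (φ.prod ψ)]
  have := Submodule.finrank_le (LinearMap.range (φ.prod ψ))
  rw [Module.finrank_prod, Module.finrank_self] at this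
  omega

theorem LinearMap.range_le_of_linearIndependent_pair (hV : finrank F V = 2) (L : V →ₗ[F] W)
    {a b : V} {K : Submodule F W} (hab : LinearIndependent F ![L a, L b]) (ha : L a ∈ K)
    (hb : L b ∈ K) : LinearMap.range L ≤ K := by
  have hli : LinearIndependent F ![a, b] :=
    LinearIndependent.of_comp L (by convert hab using 1; ext i; fin_cases i <;> rfl)
  have htop : Submodule.span F (Set.range ![a, b]) = ⊤ :=
    hli.span_eq_top_of_card_eq_finrank (by simp [hV])
  rw [LinearMap.range_eq_map, ← htop, Submodule.map_span, Submodule.span_le]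
  rintro _ ⟨_, ⟨i, rfl⟩, rfl⟩
  fin_cases i
  exacts [ha, hb]

end LinearAlgebra

theorem exists_forall_of_forall_ne_or {α : Type*} [Nonempty α] {R S : α → α → Prop}
    (hRs : ∀ {a b}, R a b → R b a) (hRe : ∀ {a b c}, R a b → R a c → R b c)
    (hSs : ∀ {a b}, S a b → S b a) (hSe : ∀ {a b c}, S a b → S a c → S b c)
    (h : ∀ a b, a ≠ b → R a b ∨ S a b) :
    (∃ a, ∀ b ≠ a, R a b) ∨ ∃ a, ∀ b ≠ a, S a b := by
  by_cases hS : ∀ a b, a ≠ b → S a b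
  · obtain ⟨a⟩ := ‹Nonempty α›
    exact .inr ⟨a, fun b hb => hS a b hb.symm⟩
  push Not at hS
  obtain ⟨a, b, hab, hSab⟩ := hS
  have hRab := (h a b hab).resolve_right hSab
  refine .inl ⟨a, fun c hca => ?_⟩
  rcases h a c hca.symm with hRac | hSac
  · exact hRac
  by_cases hcb : c = b
  · exact hcb ▸ hRab
  rcases h b c (Ne.symm hcb) with hRbc | hSbc
  · exact hRe (hRs hRab) hRbc
  · exact absurd (hSe (hSs hSac) (hSs hSbc)) hSab

namespace Matrix

variable {F : Type*} [Field F]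

section Planes

variable {m n : Type*}

def colPlane (v : m → F) : Submodule F (Matrix m n F) :=
  LinearMap.range (vecMulVecBilin F F v)

def rowPlane (w : n → F) : Submodule F (Matrix m n F) :=
  LinearMap.range ((vecMulVecBilin F F).flip w)

theorem vecMulVec_mem_colPlane (v : m → F) (u : n → F) : vecMulVec v u ∈ colPlane v :=
  ⟨u, rfl⟩

theorem vecMulVec_mem_rowPlane (u : m → F) (w : n → F) : vecMulVec u w ∈ rowPlane w :=
  ⟨u, rfl⟩

end Planes

theorem finrank_matrix_two : finrank F (Matrix (Fin 2) (Fin 2) F) = 4 := by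
  rw [Module.finrank_matrix]; simp

theorem two_le_finrank_ker_inf (φ ψ : Matrix (Fin 2) (Fin 2) F →ₗ[F] F) :
    2 ≤ finrank F ↥(LinearMap.ker φ ⊓ LinearMap.ker ψ) := by
  have := finrank_le_finrank_ker_inf_add_two φ ψ
  rw [finrank_matrix_two] at this
  omega

theorem exists_smul_row_eq_of_det_eq_zero {A : Matrix (Fin 2) (Fin 2) F} (h0 : A 0 ≠ 0)
    (h : A.det = 0) : ∃ t : F, t • A 0 = A 1 := by
  by_contra! hA
  have hrow : A.row = ![A 0, A 1] := by ext i : 1; fin_cases i <;> rfl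
  have hli : LinearIndependent F A.row := by
    rw [hrow]; exact (LinearIndependent.pair_iff' h0).mpr hA
  rw [linearIndependent_rows_iff_isUnit, isUnit_iff_isUnit_det, h] at hli
  exact not_isUnit_zero hli

theorem det_vecMulVec_add_vecMulVec (a b c d : Fin 2 → F) :
    (vecMulVec a b + vecMulVec c d).det = (of ![a, c]).det * (of ![b, d]).det := by
  have : vecMulVec a b + vecMulVec c d = (of ![a, c])ᵀ * of ![b, d] := by
    ext i j; simp [mul_apply, Fin.sum_univ_two, vecMulVec_apply]
  rw [this, det_mul, det_transpose]

theorem exists_eq_vecMulVec_of_det_eq_zero {A : Matrix (Fin 2) (Fin 2) F} (h : A.det = 0) :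
    ∃ a b : Fin 2 → F, A = vecMulVec a b := by
  by_cases h0 : A 0 = 0
  · refine ⟨![0, 1], A 1, ?_⟩
    ext i j; fin_cases i <;> simp [vecMulVec_apply, h0]
  · obtain ⟨t, ht⟩ := exists_smul_row_eq_of_det_eq_zero h0 h
    refine ⟨![1, t], A 0, ?_⟩
    ext i j; fin_cases i <;> simp [vecMulVec_apply, ← ht]

theorem exists_mem_ker_isUnit_det (φ : Matrix (Fin 2) (Fin 2) F →ₗ[F] F) :
    ∃ A ∈ LinearMap.ker φ, IsUnit A.det := by
  let E (i j : Fin 2) : Matrix (Fin 2) (Fin 2) F := single i j 1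
  have hdet (s t : F) (hst : s * t = 0) :
      IsUnit (s • E 0 0 + E 0 1 - E 1 0 + t • E 1 1).det := by
    simp [E, det_fin_two, hst]
  have hφ : ∀ s t : F, φ (s • E 0 0 + E 0 1 - E 1 0 + t • E 1 1)
      = s * φ (E 0 0) + φ (E 0 1) - φ (E 1 0) + t * φ (E 1 1) := by
    intro s t; simp
  by_cases h₀ : φ (E 0 0) = 0
  · by_cases h₁ : φ (E 1 1) = 0
    · exact ⟨E 0 0 + E 1 1, by simp [h₀, h₁], by simp [E, det_fin_two]⟩
    · refine ⟨_, ?_, hdet 0 ((φ (E 1 0) - φ (E 0 1)) / φ (E 1 1)) (zero_mul _)⟩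
      rw [LinearMap.mem_ker, hφ]; field_simp; ring
  · refine ⟨_, ?_, hdet ((φ (E 1 0) - φ (E 0 1)) / φ (E 0 0)) 0 (mul_zero _)⟩
    rw [LinearMap.mem_ker, hφ]; field_simp; ring

theorem linearMap_eq_zero_of_forall_vecMulVec {m n W : Type*} [Fintype m] [Fintype n]
    [DecidableEq m] [DecidableEq n] [AddCommGroup W] [Module F W] {φ : Matrix m n F →ₗ[F] W}
    (h : ∀ u w, φ (vecMulVec u w) = 0) : φ = 0 := by
  refine Matrix.ext_linearMap F fun i j => LinearMap.ext fun c => ?_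
  have hc : Matrix.single i j c = c • vecMulVec (Pi.single i 1) (Pi.single j 1) := by
    rw [← single_eq_single_vecMulVec_single, smul_single, smul_eq_mul, mul_one]
  simp [hc, h]

theorem eq_zero_of_forall_vecMulVec_mul_eq_zero {m n p : Type*} [Fintype n] [DecidableEq n]
    {v : m → F} (hv : v ≠ 0) {B : Matrix n p F} (h : ∀ u : n → F, vecMulVec v u * B = 0) :
    B = 0 := by
  ext i j
  have := h (Pi.single i 1)
  rw [vecMulVec_mul, single_one_vecMul] at this
  obtain ⟨k, hk⟩ := Function.ne_iff.mp hv
  have hkj : v k * B i j = 0 := congr_fun (congr_fun this k) j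
  exact (mul_eq_zero.mp hkj).resolve_left hk

theorem eq_zero_of_forall_mul_mem_colPlane {n : Type*} [Fintype n] [DecidableEq n] [Nontrivial n]
    {v : n → F} {B : Matrix n n F} (h : ∀ A, A * B ∈ colPlane v) : B = 0 := by
  by_contra hB
  obtain ⟨l, j, hlj⟩ : ∃ l j, B l j ≠ 0 := by
    by_contra! h0; exact hB (Matrix.ext h0)
  have key : ∀ i i', i' ≠ i → ∃ u : n → F, v i * u j = B l j ∧ v i' * u j = 0 := by
    intro i i' hi'
    obtain ⟨u, hu⟩ := h (single i l 1)
    exact ⟨u, by simpa [vecMulVec_apply] using congr_fun (congr_fun hu i) j,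
      by simpa [vecMulVec_apply, hi'] using congr_fun (congr_fun hu i') j⟩
  obtain ⟨a, a', haa'⟩ := exists_pair_ne n
  obtain ⟨u, hau, ha'u⟩ := key a a' haa'.symm
  obtain ⟨u', ha'u', -⟩ := key a' a haa'
  have hva' : v a' = 0 := (mul_eq_zero.mp ha'u).resolve_right (right_ne_zero_of_mul (hau ▸ hlj))
  exact hlj (by rw [← ha'u', hva', zero_mul])

theorem rowPlane_eq_of_le_ker {m n : Type*} [Fintype m] [Fintype n] [DecidableEq m] [DecidableEq n]
    (hn : Fintype.card n = 2) {φ : Matrix m n F →ₗ[F] F} (hφ : φ ≠ 0) {w w' : n → F}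
    (hw : w ≠ 0) (hw' : w' ≠ 0) (h : rowPlane w ≤ LinearMap.ker φ)
    (h' : rowPlane w' ≤ LinearMap.ker φ) :
    (rowPlane w : Submodule F (Matrix m n F)) = rowPlane w' := by
  obtain ⟨t, rfl⟩ : ∃ t : F, t • w = w' := by
    by_contra! hne
    have htop := ((LinearIndependent.pair_iff' hw).mpr hne).span_eq_top_of_card_eq_finrank
      (by simp [hn])
    refine hφ (linearMap_eq_zero_of_forall_vecMulVec fun u r => ?_)
    have hker : Submodule.span F (Set.range ![w, w']) ≤
        LinearMap.ker (φ ∘ₗ vecMulVecBilin F F u) := by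
      rw [Submodule.span_le, Set.range_subset_iff]
      intro i; fin_cases i
      exacts [h ⟨u, rfl⟩, h' ⟨u, rfl⟩]
    exact (htop ▸ hker) Submodule.mem_top
  have ht : t ≠ 0 := by rintro rfl; exact hw' (zero_smul F w)
  simp only [rowPlane, map_smul, LinearMap.range_smul _ _ ht]

theorem three_le_finrank_of_commutator_mem {K : Submodule F (Matrix (Fin 2) (Fin 2) F)}
    (h : ∀ X Y, X * Y - Y * X ∈ K) : 3 ≤ finrank F K := by
  let e : Fin 3 → Matrix (Fin 2) (Fin 2) F :=
    ![single 0 1 1, single 1 0 1, single 0 0 1 - single 1 1 1]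
  have he : LinearIndependent F e := by
    refine Fintype.linearIndependent_iff.mpr fun c hc i => ?_
    have h01 := congr_fun (congr_fun hc 0) 1
    have h10 := congr_fun (congr_fun hc 1) 0
    have h00 := congr_fun (congr_fun hc 0) 0
    simp [Fin.sum_univ_three, e] at h01 h10 h00
    fin_cases i <;> assumption
  have hle : Submodule.span F (Set.range e) ≤ K := by
    rw [Submodule.span_le, Set.range_subset_iff]
    intro i
    fin_cases i
    · simpa [e] using h (single 0 0 1) (single 0 1 1)
    · simpa [e] using h (single 1 1 1) (single 1 0 1)
    · simpa [e] using h (single 0 1 1) (single 1 0 1)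
  simpa [finrank_span_eq_card he] using Submodule.finrank_mono hle


theorem exists_colPlane_le_or_rowPlane_le
    {K : Submodule F (Matrix (Fin 2) (Fin 2) F)} (hK : 2 ≤ finrank F K)
    (hdet : ∀ A ∈ K, A.det = 0) : ∃ v ≠ 0, colPlane v ≤ K ∨ rowPlane v ≤ K := by
  obtain ⟨e, he⟩ := exists_linearIndependent_of_le_finrank hK
  have hli : LinearIndependent F ![(e 0 : Matrix (Fin 2) (Fin 2) F), e 1] := by
    have := he.map' K.subtype K.ker_subtype
    rwa [show ⇑K.subtype ∘ e = ![(e 0 : Matrix (Fin 2) (Fin 2) F), e 1] by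
      ext i : 1; fin_cases i <;> rfl] at this
  obtain ⟨x₁, x₂, hX⟩ := exists_eq_vecMulVec_of_det_eq_zero (hdet _ (e 0).2)
  obtain ⟨y₁, y₂, hY⟩ := exists_eq_vecMulVec_of_det_eq_zero (hdet _ (e 1).2)
  have hX0 : vecMulVec x₁ x₂ ≠ 0 := hX ▸ hli.ne_zero 0
  rw [ne_eq, vecMulVec_eq_zero, not_or] at hX0
  have hsum := hdet _ (K.add_mem (e 0).2 (e 1).2)
  rw [hX, hY, det_vecMulVec_add_vecMulVec, mul_eq_zero] at hsum
  rw [hX, hY] at hli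
  have hXK : vecMulVec x₁ x₂ ∈ K := hX ▸ (e 0).2
  have hYK : vecMulVec y₁ y₂ ∈ K := hY ▸ (e 1).2
  rcases hsum with h | h
  · obtain ⟨t, ht⟩ := exists_smul_row_eq_of_det_eq_zero (A := of ![x₁, y₁]) hX0.1 h
    change t • x₁ = y₁ at ht
    rw [← ht, smul_vecMulVec, ← vecMulVec_smul] at hli hYK
    exact ⟨x₁, hX0.1, .inl <|
      LinearMap.range_le_of_linearIndependent_pair (by simp) _ hli hXK hYK⟩
  · obtain ⟨t, ht⟩ := exists_smul_row_eq_of_det_eq_zero (A := of ![x₂, y₂]) hX0.2 h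
    change t • x₂ = y₂ at ht
    rw [← ht, vecMulVec_smul, ← smul_vecMulVec] at hli hYK
    exact ⟨x₂, hX0.2, .inr <|
      LinearMap.range_le_of_linearIndependent_pair (by simp) _ hli hXK hYK⟩

end Matrix

section Decomposition

variable {F : Type*} [Field F] {n ι : Type*} [Fintype n] [Fintype ι]

def IsMatMulDecomp (f g : ι → Matrix n n F →ₗ[F] F) (C : ι → Matrix n n F) : Prop :=
  ∀ A B, A * B = ∑ i, (f i A * g i B) • C i

variable {f g : ι → Matrix n n F →ₗ[F] F} {C : ι → Matrix n n F}

theorem IsMatMulDecomp.transpose (hd : IsMatMulDecomp f g C) :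
    IsMatMulDecomp (fun i => g i ∘ₗ (transposeLinearEquiv n n F F).toLinearMap)
      (fun i => f i ∘ₗ (transposeLinearEquiv n n F F).toLinearMap) fun i => (C i)ᵀ := by
  intro A B
  rw [← transpose_transpose (A * B), transpose_mul, hd, transpose_sum]
  simp [mul_comm]

theorem IsMatMulDecomp.conj [DecidableEq n] (hd : IsMatMulDecomp f g C) {P Q : Matrix n n F}
    (hP : IsUnit P.det) (hQ : IsUnit Q.det) :
    IsMatMulDecomp (fun i => f i ∘ₗ LinearMap.mulLeft F P)
      (fun i => g i ∘ₗ LinearMap.mulRight F Q) fun i => P⁻¹ * C i * Q⁻¹ := by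
  intro A B
  calc A * B = P⁻¹ * ((P * A) * (B * Q)) * Q⁻¹ := by
        rw [Matrix.mul_assoc, Matrix.mul_assoc, mul_nonsing_inv_cancel_right _ _ hQ,
          ← Matrix.mul_assoc, nonsing_inv_mul_cancel_left _ _ hP]
    _ = _ := by simp [hd (P * A), sum_mul, mul_sum, Matrix.mul_assoc]

theorem IsMatMulDecomp.eq_zero_of_forall_left_eq_zero [DecidableEq n] (hd : IsMatMulDecomp f g C)
    {A : Matrix n n F} (h : ∀ i, f i A = 0) : A = 0 := by
  simpa [h] using hd A 1

theorem IsMatMulDecomp.mul_eq_sum_compl_pair [DecidableEq ι] (hd : IsMatMulDecomp f g C)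
    {j k : ι} {A B : Matrix n n F} (hj : f j A * g j B = 0) (hk : f k A * g k B = 0) :
    A * B = ∑ i ∈ {j, k}ᶜ, (f i A * g i B) • C i := by
  rw [hd, ← sum_add_sum_compl {j, k}ᶜ, compl_compl, add_eq_left]
  refine sum_eq_zero fun i hi => ?_
  rcases mem_insert.mp hi with rfl | hi
  · rw [hj, zero_smul]
  · rw [mem_singleton.mp hi, hk, zero_smul]

end Decomposition

section RowPlanes

variable {F : Type*} [Field F] {ι : Type*} {f : ι → Matrix (Fin 2) (Fin 2) F →ₗ[F] F}

def SharesRowPlane (f : ι → Matrix (Fin 2) (Fin 2) F →ₗ[F] F) (j k : ι) : Prop :=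
  f j ≠ 0 ∧ f k ≠ 0 ∧
    ∃ w ≠ 0, rowPlane w ≤ LinearMap.ker (f j) ⊓ LinearMap.ker (f k)

theorem SharesRowPlane.symm {j k : ι} (h : SharesRowPlane f j k) : SharesRowPlane f k j := by
  obtain ⟨hj, hk, w, hw, hwjk⟩ := h
  exact ⟨hk, hj, w, hw, inf_comm (LinearMap.ker (f j)) _ ▸ hwjk⟩

theorem SharesRowPlane.euclidean {a b c : ι} (hab : SharesRowPlane f a b)
    (hac : SharesRowPlane f a c) : SharesRowPlane f b c := by
  obtain ⟨ha, hb, w, hw, hwab⟩ := hab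
  obtain ⟨-, hc, w', hw', hwac⟩ := hac
  have hww' := rowPlane_eq_of_le_ker (Fintype.card_fin 2) ha hw hw' (hwab.trans inf_le_left)
    (hwac.trans inf_le_left)
  exact ⟨hb, hc, w, hw, le_inf (hwab.trans inf_le_right) (hww' ▸ hwac.trans inf_le_right)⟩

end RowPlanes

section SixTerms

variable {F : Type*} [Field F] {ι : Type*} [Fintype ι] [DecidableEq ι]
  {f g : ι → Matrix (Fin 2) (Fin 2) F →ₗ[F] F} {C : ι → Matrix (Fin 2) (Fin 2) F}

theorem IsMatMulDecomp.apply_mul_apply_comm (hd : IsMatMulDecomp f g C)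
    (hι : Fintype.card ι = 6) {j k : ι} (hjk : j ≠ k) (hfj : f j 1 = 0) (hfk : f k 1 = 0)
    (hgj : g j 1 = 0) (hgk : g k 1 = 0) {i : ι} (hi : i ∈ ({j, k}ᶜ : Finset ι))
    (X Y : Matrix (Fin 2) (Fin 2) F) : f i X * g i Y = f i Y * g i X := by
  set S : Finset ι := {j, k}ᶜ
  have hright : ∀ X, X = ∑ i ∈ S, (f i X * g i 1) • C i := fun X => by
    have := hd.mul_eq_sum_compl_pair (A := X) (B := 1) (by rw [hgj, mul_zero])
      (by rw [hgk, mul_zero])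
    rwa [mul_one] at this
  have hleft : ∀ X, X = ∑ i ∈ S, (f i 1 * g i X) • C i := fun X => by
    have := hd.mul_eq_sum_compl_pair (A := 1) (B := X) (by rw [hfj, zero_mul])
      (by rw [hfk, zero_mul])
    rwa [one_mul] at this
  -- `X ↦ f i' X * g i' 1` are the coordinate functionals of the basis `(C i)_{i ∈ S}`.
  have hC : ∀ i ∈ S, ∀ i' ∈ S, f i' (C i) * g i' 1 = if i' = i then 1 else 0 := by
    intro i hi
    obtain ⟨X, hX⟩ := exists_apply_eq_ite_of_card_le_finrank (fun i => g i 1 • f i)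
      (by rw [card_compl, card_pair hjk, hι, finrank_matrix_two]) (fun X hX => by
        rw [hright X]; exact sum_eq_zero fun i hi => by simp [← hX i hi, mul_comm]) hi
    simp only [LinearMap.smul_apply, smul_eq_mul] at hX
    have hXC : X = C i := by
      rw [hright X, sum_congr rfl fun i' hi' => by rw [mul_comm, hX i' hi']]
      simp [hi]
    simpa [hXC, mul_comm] using hX
  have hcoord : ∀ X, f i X * g i 1 = f i 1 * g i X := by
    intro X
    conv_lhs => rw [hleft X]
    simp only [map_sum, map_smul, smul_eq_mul, sum_mul, mul_assoc]
    rw [sum_congr rfl fun x hx => by rw [hC x hx i hi]]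
    simp [hi]
  have hg1 : g i 1 ≠ 0 := fun h0 => by simpa [h0] using hC i hi i hi
  refine mul_right_cancel₀ hg1 ?_
  linear_combination g i Y * hcoord X - g i X * hcoord Y

theorem IsMatMulDecomp.false_of_apply_one_eq_zero (hd : IsMatMulDecomp f g C)
    (hι : Fintype.card ι = 6) {j k : ι} (hjk : j ≠ k) (hfj : f j 1 = 0) (hfk : f k 1 = 0)
    (hgj : g j 1 = 0) (hgk : g k 1 = 0) : False := by
  have hcomm : ∀ X Y, X * Y - Y * X ∈ Submodule.span F {C j, C k} := by
    intro X Y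
    rw [hd X Y, hd Y X, ← sum_sub_distrib, ← sum_add_sum_compl {j, k}ᶜ, sum_eq_zero, zero_add,
      compl_compl, sum_pair hjk]
    · simp only [← sub_smul]
      exact Submodule.mem_span_pair.mpr ⟨_, _, rfl⟩
    · intro i hi
      rw [← sub_smul, hd.apply_mul_apply_comm hι hjk hfj hfk hgj hgk hi X Y,
        mul_comm (f i Y), sub_self, zero_smul]
  have h2 := finrank_range_le_card (R := F) ![C j, C k]
  rw [Matrix.range_cons, Matrix.range_cons, Matrix.range_empty, Set.union_empty,
    Set.singleton_union, Set.finrank, Fintype.card_fin] at h2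
  have h3 := three_le_finrank_of_commutator_mem hcomm
  omega

theorem IsMatMulDecomp.false_of_isUnit_det (hd : IsMatMulDecomp f g C) (hι : Fintype.card ι = 6)
    {j k : ι} (hjk : j ≠ k) {A B : Matrix (Fin 2) (Fin 2) F} (hA : IsUnit A.det)
    (hB : IsUnit B.det) (hfj : f j A = 0) (hfk : f k A = 0) (hgj : g j B = 0) (hgk : g k B = 0) :
    False :=
  (hd.conj hA hB).false_of_apply_one_eq_zero hι hjk (by simpa using hfj) (by simpa using hfk)
    (by simpa using hgj) (by simpa using hgk)

theorem IsMatMulDecomp.mem_colPlane (hd : IsMatMulDecomp f g C) (hι : Fintype.card ι = 6)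
    {j k : ι} (hjk : j ≠ k) {v : Fin 2 → F} (hv : v ≠ 0)
    (hj : colPlane v ≤ LinearMap.ker (f j)) (hk : colPlane v ≤ LinearMap.ker (f k))
    {i : ι} (hi : i ∈ ({j, k}ᶜ : Finset ι)) :
    C i ∈ colPlane v := by
  set S : Finset ι := {j, k}ᶜ
  have hT : ∀ u B, vecMulVec v u * B = ∑ i ∈ S, (f i (vecMulVec v u) * g i B) • C i :=
    fun u B => hd.mul_eq_sum_compl_pair (by rw [hj (vecMulVec_mem_colPlane v u), zero_mul])
      (by rw [hk (vecMulVec_mem_colPlane v u), zero_mul])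
  obtain ⟨B, hB⟩ := exists_apply_eq_ite_of_card_le_finrank g
    (by rw [card_compl, card_pair hjk, hι, finrank_matrix_two])
    (fun B hB => eq_zero_of_forall_vecMulVec_mul_eq_zero hv fun u => by
      rw [hT]; exact sum_eq_zero fun i hi => by simp [hB i hi]) hi
  have hTB : ∀ u, vecMulVec v u * B = f i (vecMulVec v u) • C i := by
    intro u
    rw [hT, sum_congr rfl fun i' hi' => by rw [hB i' hi']]
    simp [hi]
  obtain ⟨u, hu⟩ : ∃ u, vecMulVec v u * B ≠ 0 := by
    by_contra! h
    simpa [eq_zero_of_forall_vecMulVec_mul_eq_zero hv h] using hB i hi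
  have hfu : f i (vecMulVec v u) ≠ 0 := left_ne_zero_of_smul (hTB u ▸ hu)
  rw [← inv_smul_smul₀ hfu (C i), ← hTB, vecMulVec_mul]
  exact Submodule.smul_mem _ _ (vecMulVec_mem_colPlane _ _)

theorem IsMatMulDecomp.false_of_colPlane_le_ker (hd : IsMatMulDecomp f g C)
    (hι : Fintype.card ι = 6) {j k : ι} (hjk : j ≠ k) {v : Fin 2 → F} (hv : v ≠ 0)
    (hj : colPlane v ≤ LinearMap.ker (f j)) (hk : colPlane v ≤ LinearMap.ker (f k)) :
    False := by
  obtain ⟨B, hB, hB0⟩ := Submodule.exists_mem_ne_zero_of_ne_bot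
    (p := LinearMap.ker (g j) ⊓ LinearMap.ker (g k)) fun h => by
      have := two_le_finrank_ker_inf (g j) (g k)
      rw [h, finrank_bot] at this
      omega
  refine hB0 (eq_zero_of_forall_mul_mem_colPlane (v := v) fun A => ?_)
  rw [hd.mul_eq_sum_compl_pair (by rw [hB.1, mul_zero]) (by rw [hB.2, mul_zero])]
  exact Submodule.sum_mem _ fun i hi => Submodule.smul_mem _ _ (hd.mem_colPlane hι hjk hv hj hk hi)

theorem IsMatMulDecomp.sharesRowPlane_of_forall_not_isUnit (hd : IsMatMulDecomp f g C)
    (hι : Fintype.card ι = 6) {j k : ι} (hjk : j ≠ k)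
    (h : ∀ A ∈ LinearMap.ker (f j) ⊓ LinearMap.ker (f k), ¬IsUnit A.det) :
    SharesRowPlane f j k := by
  obtain ⟨v, hv, hcol | hrow⟩ := exists_colPlane_le_or_rowPlane_le (two_le_finrank_ker_inf _ _)
    fun A hA => by simpa using h A hA
  · exact (hd.false_of_colPlane_le_ker hι hjk hv (hcol.trans inf_le_left)
      (hcol.trans inf_le_right)).elim
  refine ⟨fun hfj => ?_, fun hfk => ?_, v, hv, hrow⟩
  · obtain ⟨A, hA, hAu⟩ := exists_mem_ker_isUnit_det (f k)
    exact h A ⟨by simp [hfj], hA⟩ hAu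
  · obtain ⟨A, hA, hAu⟩ := exists_mem_ker_isUnit_det (f j)
    exact h A ⟨hA, by simp [hfk]⟩ hAu

theorem IsMatMulDecomp.sharesRowPlane_or (hd : IsMatMulDecomp f g C) (hι : Fintype.card ι = 6)
    {j k : ι} (hjk : j ≠ k) :
    SharesRowPlane f j k ∨
      SharesRowPlane (fun i => g i ∘ₗ (transposeLinearEquiv (Fin 2) (Fin 2) F F).toLinearMap)
        j k := by
  by_cases hf : ∀ A ∈ LinearMap.ker (f j) ⊓ LinearMap.ker (f k), ¬IsUnit A.det
  · exact .inl (hd.sharesRowPlane_of_forall_not_isUnit hι hjk hf)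
  push Not at hf
  obtain ⟨A, hA, hAu⟩ := hf
  refine .inr (hd.transpose.sharesRowPlane_of_forall_not_isUnit hι hjk fun B hB hBu => ?_)
  exact hd.false_of_isUnit_det hι hjk hAu (B := Bᵀ) (by simpa using hBu) hA.1 hA.2 hB.1 hB.2

theorem IsMatMulDecomp.not_forall_sharesRowPlane (hd : IsMatMulDecomp f g C)
    (hι : Fintype.card ι = 6) (a : ι) : ¬∀ b ≠ a, SharesRowPlane f a b := by
  intro h
  have : Nontrivial ι := Fintype.one_lt_card_iff_nontrivial.mp (by omega)
  obtain ⟨b, hb⟩ := exists_ne a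
  obtain ⟨hfa, -, w, hw, hwab⟩ := h b hb
  have hall : ∀ i, rowPlane w ≤ LinearMap.ker (f i) := by
    intro i
    by_cases hi : i = a
    · exact hi ▸ hwab.trans inf_le_left
    obtain ⟨-, -, w', hw', hwai⟩ := h i hi
    rw [rowPlane_eq_of_le_ker (Fintype.card_fin 2) hfa hw hw' (hwab.trans inf_le_left)
      (hwai.trans inf_le_left)]
    exact hwai.trans inf_le_right
  exact vecMulVec_ne_zero (Pi.single_ne_zero_iff.mpr one_ne_zero) hw
    (hd.eq_zero_of_forall_left_eq_zero fun i => hall i (vecMulVec_mem_rowPlane (Pi.single 0 1) w))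

end SixTerms

theorem not_hasBilinearAlgo_six (F : Type*) [Field F] : ¬HasBilinearAlgo F 2 2 2 6 := by
  rintro ⟨f, g, C, hd : IsMatMulDecomp f g C⟩
  have hι : Fintype.card (Fin 6) = 6 := Fintype.card_fin 6
  rcases exists_forall_of_forall_ne_or (R := SharesRowPlane f) (S := SharesRowPlane _)
      SharesRowPlane.symm SharesRowPlane.euclidean SharesRowPlane.symm SharesRowPlane.euclidean
      fun j k hjk => hd.sharesRowPlane_or hι hjk with ⟨a, ha⟩ | ⟨a, ha⟩
  · exact hd.not_forall_sharesRowPlane hι a ha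
  · exact hd.transpose.not_forall_sharesRowPlane hι a ha

section Algorithms

variable {F : Type*} [Field F]

theorem HasBilinearAlgo.mono {m n p r s : ℕ} (h : HasBilinearAlgo F m n p r) (hrs : r ≤ s) :
    HasBilinearAlgo F m n p s := by
  induction s, hrs using Nat.le_induction with
  | base => exact h
  | succ s _ ih =>
    obtain ⟨f, g, C, hC⟩ := ih
    refine ⟨Fin.snoc f 0, Fin.snoc g 0, Fin.snoc C 0, fun A B => ?_⟩
    simp [Fin.sum_univ_castSucc, hC A B]

theorem hasBilinearAlgo_strassen : HasBilinearAlgo F 2 2 2 7 := by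
  let a (i j : Fin 2) := entryLinearMap F F (m := Fin 2) (n := Fin 2) i j
  refine ⟨![a 0 0 + a 1 1, a 1 0 + a 1 1, a 0 0, a 1 1, a 0 0 + a 0 1, a 1 0 - a 0 0,
      a 0 1 - a 1 1],
    ![a 0 0 + a 1 1, a 0 0, a 0 1 - a 1 1, a 1 0 - a 0 0, a 1 1, a 0 0 + a 0 1, a 1 0 + a 1 1],
    ![!![1, 0; 0, 1], !![0, 0; 1, -1], !![0, 1; 0, 1], !![1, 0; 1, 0], !![-1, 1; 0, 0],
      !![0, 0; 0, 1], !![1, 0; 0, 0]], fun A B => ?_⟩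
  ext i j
  fin_cases i <;> fin_cases j <;> simp [a, Fin.sum_univ_succ, mul_apply] <;> ring

end Algorithms

theorem rank_222_eq_7 (F : Type*) [Field F] :
    7 ≤ matMulRank F 2 2 2 ∧ matMulRank F 2 2 2 = 7 := by
  have h7 : HasBilinearAlgo F 2 2 2 7 := hasBilinearAlgo_strassen
  have hlow : 7 ≤ matMulRank F 2 2 2 := le_csInf ⟨7, h7⟩ fun r hr => by
    by_contra! hr7
    exact not_hasBilinearAlgo_six F (hr.mono (by omega))
  exact ⟨hlow, le_antisymm (Nat.sInf_le h7) hlow⟩
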